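/- arXiv:1110.2425 — 4 statements merged into one kernel-verified Lean document; each statement's English description precedes it below -/
import Mathlib

section
/- Duality of urn models: the probability that k > 0 white balls remain when all black balls are drawn in urn model I with weights (α_n), (β_m) equals the same probability in urn model II with weights (1/α_n), (1/β_m). -/
open Finset

/-- Urn model I (sampling with general weights): probability that `k` white balls remain when
all black balls have been drawn. -/
noncomputable def urnP (α β : ℕ → ℝ) : ℕ → ℕ → ℕ → ℝ
  | n, 0, k => if k = n then 1 else 0
  | 0, _ + 1, k => if k = 0 then 1 else 0
  | n + 1, m + 1, k =>
      α (n + 1) / (α (n + 1) + β (m + 1)) * urnP α β n (m + 1) k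
        + β (m + 1) / (α (n + 1) + β (m + 1)) * urnP α β (n + 1) m k

/-- Urn model II (OK Corral with general weights): a white ball is removed with probability
`β m / (α n + β m)` and a black ball with probability `α n / (α n + β m)`. -/
noncomputable def urnPII (α β : ℕ → ℝ) : ℕ → ℕ → ℕ → ℝ
  | n, 0, k => if k = n then 1 else 0
  | 0, _ + 1, k => if k = 0 then 1 else 0
  | n + 1, m + 1, k =>
      β (m + 1) / (α (n + 1) + β (m + 1)) * urnPII α β n (m + 1) k
        + α (n + 1) / (α (n + 1) + β (m + 1)) * urnPII α β (n + 1) m k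

/-! Inverting both weights swaps the two removal probabilities, because `a⁻¹ / (a⁻¹ + b⁻¹) = b / (a + b)`;
hence the recursions defining the two models coincide step by step, for every `k`. -/

theorem inv_div_inv_add_inv {K : Type*} [Field K] {a b : K} (ha : a ≠ 0) (hb : b ≠ 0) :
    a⁻¹ / (a⁻¹ + b⁻¹) = b / (a + b) := by
  rw [inv_add_inv ha hb, div_div_eq_mul_div, inv_mul_eq_div, mul_div_cancel_left₀ b ha]

theorem urnP_eq_urnPII {α β α' β' : ℕ → ℝ}
    (hwhite : ∀ n m, α (n + 1) / (α (n + 1) + β (m + 1)) = β' (m + 1) / (α' (n + 1) + β' (m + 1)))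
    (hblack : ∀ n m, β (m + 1) / (α (n + 1) + β (m + 1)) = α' (n + 1) / (α' (n + 1) + β' (m + 1)))
    (n m k : ℕ) : urnP α β n m k = urnPII α' β' n m k := by
  induction n, m, k using urnP.induct with
  | case5 n m k ih₁ ih₂ => rw [urnP, urnPII, hwhite, hblack, ih₁, ih₂]
  | _ => simp [urnP, urnPII]

theorem urn_duality_general (αt βt : ℕ → ℝ) (hα : ∀ n, 1 ≤ n → 0 < αt n)
    (hβ : ∀ m, 1 ≤ m → 0 < βt m) (n m k : ℕ) :
    urnP (fun n => (αt n)⁻¹) (fun m => (βt m)⁻¹) n m k = urnPII αt βt n m k := by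
  have hα' n : αt (n + 1) ≠ 0 := (hα (n + 1) n.succ_pos).ne'
  have hβ' m : βt (m + 1) ≠ 0 := (hβ (m + 1) m.succ_pos).ne'
  refine urnP_eq_urnPII (fun n m => ?_) (fun n m => ?_) n m k
  · exact inv_div_inv_add_inv (hα' n) (hβ' m)
  · rw [add_comm (αt (n + 1))⁻¹, add_comm (αt (n + 1))]
    exact inv_div_inv_add_inv (hβ' m) (hα' n)

/-- Duality: urn model I with weights `(α, β)` and urn model II with the reciprocal weights
`(1/α, 1/β)` give the same probability of `k > 0` remaining white balls. -/
theorem urn_duality (αt βt : ℕ → ℝ) (hα : ∀ n, 1 ≤ n → 0 < αt n)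
    (hβ : ∀ m, 1 ≤ m → 0 < βt m) (n m k : ℕ) (hk : 0 < k) :
    urnP (fun n => (αt n)⁻¹) (fun m => (βt m)⁻¹) n m k = urnPII αt βt n m k :=
  urn_duality_general αt βt hα hβ n m k
end

section
/- Explicit distribution for the generalized sampling urn: for n, m ≥ 1 and 1 ≤ k ≤ n, P(X_{n,m} = k) = (∏_{h=1}^{m} β_h)(∏_{h=k+1}^{n} α_h) · Σ_{ℓ=1}^{m} 1/[(∏_{j=k}^{n}(α_j + β_ℓ)) · (∏_{i=1, i≠ℓ}^{m}(β_i − β_ℓ))]. -/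
/-!
For `n > k` the closed form satisfies the same recursion in `(n, m)` as the urn: summand by
summand this is the splitting `α (n+1) + β (m+1) = (α (n+1) + β ℓ) + (β (m+1) - β ℓ)`.
On the boundary `n = k` every draw must be black, so `P(X_{k,m} = k) = ∏ β i / (α k + β i)`,
and the closed form agrees by the partial fraction decomposition of `1 / ∏ (x + β i)` at
`x = α k`, i.e. Lagrange interpolation of the constant `1` at the nodes `-β i`.
-/

open Finset

theorem Lagrange.prod_sub_inv_eq_sum_nodalWeight_mul_inv {F ι : Type*} [Field F] [DecidableEq ι]
    {s : Finset ι} {v : ι → F} {x : F} (hvs : Set.InjOn v s) (hs : s.Nonempty)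
    (hx : ∀ i ∈ s, x ≠ v i) :
    (∏ i ∈ s, (x - v i))⁻¹ = ∑ i ∈ s, nodalWeight s v i * (x - v i)⁻¹ := by
  have h := Lagrange.eval_interpolate_not_at_node 1 hx
  rw [interpolate_one hvs hs, Polynomial.eval_one, eval_nodal] at h
  simp only [Pi.one_apply, mul_one] at h
  exact inv_eq_of_mul_eq_one_right h.symm

section

variable {α β : ℕ → ℝ}

theorem urnP_of_lt : ∀ n m k, n < k → urnP α β n m k = 0
  | n, 0, k, h => by rw [urnP, if_neg h.ne']
  | 0, m + 1, k, h => by rw [urnP, if_neg h.ne']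
  | n + 1, m + 1, k, h => by
      rw [urnP, urnP_of_lt n (m + 1) k (by omega), urnP_of_lt (n + 1) m k h]; ring

theorem urnP_self (k m : ℕ) :
    urnP α β (k + 1) m (k + 1) = ∏ i ∈ Icc 1 m, β i / (α (k + 1) + β i) := by
  induction m with
  | zero => simp [urnP]
  | succ m ih =>
    rw [urnP, urnP_of_lt k _ _ k.lt_succ_self, ih, prod_Icc_succ_top (by omega)]
    ring

noncomputable def urnSum (α β : ℕ → ℝ) (k n m : ℕ) : ℝ :=
  ∑ ℓ ∈ Icc 1 m, ((∏ j ∈ Icc k n, (α j + β ℓ)) * ∏ i ∈ (Icc 1 m).erase ℓ, (β i - β ℓ))⁻¹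

noncomputable def urnClosedForm (α β : ℕ → ℝ) (k n m : ℕ) : ℝ :=
  (∏ h ∈ Icc 1 m, β h) * (∏ h ∈ Icc (k + 1) n, α h) * urnSum α β k n m

theorem urnSum_zero_right (k n : ℕ) : urnSum α β k n 0 = 0 := by
  simp [urnSum]

theorem urnSum_self (k m : ℕ) (hm : 1 ≤ m) (hβ : Set.InjOn β (Icc 1 m))
    (hαβ : ∀ i ∈ Icc 1 m, α k + β i ≠ 0) :
    urnSum α β k k m = ∏ i ∈ Icc 1 m, (α k + β i)⁻¹ := by
  have hinj : Set.InjOn (fun i => -β i) (Icc 1 m) := fun i hi j hj h => hβ hi hj (neg_inj.mp h)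
  have h := Lagrange.prod_sub_inv_eq_sum_nodalWeight_mul_inv (x := α k) hinj
    (nonempty_Icc.mpr hm) (fun i hi h => hαβ i hi (by rw [h, neg_add_cancel]))
  simp only [sub_neg_eq_add, Lagrange.nodalWeight, neg_add_eq_sub] at h
  rw [prod_inv_distrib, h, urnSum]
  refine sum_congr rfl fun ℓ _ => ?_
  rw [Icc_self, prod_singleton, mul_inv, prod_inv_distrib, mul_comm]

theorem urnSum_succ_succ (k n m : ℕ) (hkn : k ≤ n + 1)
    (hαβ : ∀ ℓ ∈ Icc 1 (m + 1), α (n + 1) + β ℓ ≠ 0)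
    (hβ : Set.InjOn β (Icc 1 (m + 1))) :
    (α (n + 1) + β (m + 1)) * urnSum α β k (n + 1) (m + 1)
      = urnSum α β k n (m + 1) + urnSum α β k (n + 1) m := by
  have hP : ∀ ℓ, ∏ j ∈ Icc k (n + 1), (α j + β ℓ)
      = (∏ j ∈ Icc k n, (α j + β ℓ)) * (α (n + 1) + β ℓ) := fun ℓ => prod_Icc_succ_top hkn _
  have hQ : ∀ ℓ ∈ Icc 1 m, ∏ i ∈ (Icc 1 (m + 1)).erase ℓ, (β i - β ℓ)
      = (∏ i ∈ (Icc 1 m).erase ℓ, (β i - β ℓ)) * (β (m + 1) - β ℓ) := by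
    intro ℓ hℓ
    have hins : (Icc 1 (m + 1)).erase ℓ = insert (m + 1) ((Icc 1 m).erase ℓ) := by
      ext i
      simp only [mem_Icc] at hℓ
      simp only [mem_erase, mem_Icc, mem_insert]
      omega
    rw [hins, prod_insert (by simp), mul_comm]
  have hlast : (α (n + 1) + β (m + 1))
      * ((∏ j ∈ Icc k (n + 1), (α j + β (m + 1)))
        * ∏ i ∈ (Icc 1 (m + 1)).erase (m + 1), (β i - β (m + 1)))⁻¹
      = ((∏ j ∈ Icc k n, (α j + β (m + 1)))
        * ∏ i ∈ (Icc 1 (m + 1)).erase (m + 1), (β i - β (m + 1)))⁻¹ := by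
    have := hαβ (m + 1) (by simp)
    rw [hP]
    field_simp
  have hterm : ∀ ℓ ∈ Icc 1 m, (α (n + 1) + β (m + 1))
      * ((∏ j ∈ Icc k (n + 1), (α j + β ℓ)) * ∏ i ∈ (Icc 1 (m + 1)).erase ℓ, (β i - β ℓ))⁻¹
      = ((∏ j ∈ Icc k n, (α j + β ℓ)) * ∏ i ∈ (Icc 1 (m + 1)).erase ℓ, (β i - β ℓ))⁻¹
        + ((∏ j ∈ Icc k (n + 1), (α j + β ℓ)) * ∏ i ∈ (Icc 1 m).erase ℓ, (β i - β ℓ))⁻¹ := by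
    intro ℓ hℓ
    have hu := hαβ ℓ (by simp at hℓ ⊢; omega)
    have hw : β (m + 1) - β ℓ ≠ 0 := sub_ne_zero_of_ne <|
      hβ.ne (by simp) (by simp at hℓ ⊢; omega) (by simp at hℓ; omega)
    rw [hP, hQ ℓ hℓ]
    field_simp
    ring
  rw [urnSum, urnSum, urnSum, sum_Icc_succ_top (by omega), sum_Icc_succ_top (by omega), mul_add,
    mul_sum, sum_congr rfl hterm, sum_add_distrib, hlast]
  ring

theorem urnClosedForm_zero_right (k n : ℕ) : urnClosedForm α β k n 0 = 0 := by
  rw [urnClosedForm, urnSum_zero_right, mul_zero]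

theorem urnClosedForm_self (k m : ℕ) (hm : 1 ≤ m) (hβ : Set.InjOn β (Icc 1 m))
    (hαβ : ∀ i ∈ Icc 1 m, α k + β i ≠ 0) :
    urnClosedForm α β k k m = ∏ i ∈ Icc 1 m, β i / (α k + β i) := by
  rw [urnClosedForm, urnSum_self k m hm hβ hαβ, Icc_eq_empty (by omega : ¬k + 1 ≤ k),
    prod_empty, mul_one, ← prod_mul_distrib]
  rfl

theorem urnClosedForm_succ_succ (k n m : ℕ) (hkn : k ≤ n)
    (hαβ : ∀ ℓ ∈ Icc 1 (m + 1), α (n + 1) + β ℓ ≠ 0)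
    (hβ : Set.InjOn β (Icc 1 (m + 1))) :
    urnClosedForm α β k (n + 1) (m + 1)
      = α (n + 1) / (α (n + 1) + β (m + 1)) * urnClosedForm α β k n (m + 1)
        + β (m + 1) / (α (n + 1) + β (m + 1)) * urnClosedForm α β k (n + 1) m := by
  have hS := urnSum_succ_succ k n m (by omega) hαβ hβ
  have hne := hαβ (m + 1) (by simp)
  simp only [urnClosedForm]
  rw [prod_Icc_succ_top (by omega : 1 ≤ m + 1), prod_Icc_succ_top (by omega : k + 1 ≤ n + 1)]
  field_simp
  linear_combination (∏ h ∈ Icc 1 m, β h) * β (m + 1) * (∏ h ∈ Icc (k + 1) n, α h) * α (n + 1) * hS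

end

theorem urnP_explicit_general (α β : ℕ → ℝ)
    (hαpos : ∀ j, 1 ≤ j → 0 < α j) (hβpos : ∀ i, 1 ≤ i → 0 < β i)
    (hβdist : ∀ i ℓ, 1 ≤ i → 1 ≤ ℓ → i ≠ ℓ → β i ≠ β ℓ)
    (n m k : ℕ) (hm : 1 ≤ m) (hk : 1 ≤ k) (hkn : k ≤ n) :
    urnP α β n m k
      = (∏ h ∈ Icc 1 m, β h) * (∏ h ∈ Icc (k + 1) n, α h)
        * ∑ ℓ ∈ Icc 1 m,
            ((∏ j ∈ Icc k n, (α j + β ℓ)) * ∏ i ∈ (Icc 1 m).erase ℓ, (β i - β ℓ))⁻¹ := by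
  have hαβ : ∀ j, 1 ≤ j → ∀ {M}, ∀ ℓ ∈ Icc 1 M, α j + β ℓ ≠ 0 := fun j hj _ ℓ hℓ =>
    (add_pos (hαpos j hj) (hβpos ℓ (mem_Icc.mp hℓ).1)).ne'
  have hβinj : ∀ M, Set.InjOn β (Icc 1 M) := fun _ i hi ℓ hℓ =>
    not_imp_not.mp (hβdist i ℓ (mem_Icc.mp hi).1 (mem_Icc.mp hℓ).1)
  obtain ⟨k, rfl⟩ := Nat.exists_eq_add_one_of_ne_zero (by omega : k ≠ 0)
  change urnP α β n m (k + 1) = urnClosedForm α β (k + 1) n m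
  induction n, hkn using Nat.le_induction generalizing m with
  | base => rw [urnP_self, urnClosedForm_self _ _ hm (hβinj m) (hαβ _ hk)]
  | succ n hkn ih =>
    clear hm
    induction m with
    | zero => rw [urnClosedForm_zero_right, urnP, if_neg (by omega)]
    | succ m ihm =>
      rw [urnP, ih (m + 1) (by omega), ihm,
        urnClosedForm_succ_succ _ _ _ hkn (hαβ _ (by omega)) (hβinj (m + 1))]

/-- Explicit distribution for urn model I with pairwise distinct positive weight sequences:
`P(X_{n,m} = k) = (∏_{h=1}^m β h)(∏_{h=k+1}^n α h)
  ∑_{ℓ=1}^m 1 / [(∏_{j=k}^n (α j + β ℓ)) (∏_{i=1, i≠ℓ}^m (β i - β ℓ))]`. -/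
theorem urnP_explicit (α β : ℕ → ℝ)
    (hαpos : ∀ j, 1 ≤ j → 0 < α j) (hβpos : ∀ i, 1 ≤ i → 0 < β i)
    (hαdist : ∀ j ℓ, 1 ≤ j → 1 ≤ ℓ → j ≠ ℓ → α j ≠ α ℓ)
    (hβdist : ∀ i ℓ, 1 ≤ i → 1 ≤ ℓ → i ≠ ℓ → β i ≠ β ℓ)
    (n m k : ℕ) (hn : 1 ≤ n) (hm : 1 ≤ m) (hk : 1 ≤ k) (hkn : k ≤ n) :
    urnP α β n m k
      = (∏ h ∈ Icc 1 m, β h) * (∏ h ∈ Icc (k + 1) n, α h)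
        * ∑ ℓ ∈ Icc 1 m,
            ((∏ j ∈ Icc k n, (α j + β ℓ)) * ∏ i ∈ (Icc 1 m).erase ℓ, (β i - β ℓ))⁻¹ :=
  urnP_explicit_general α β hαpos hβpos hβdist n m k hm hk hkn
end

section
/- Factorial moments for p = 1: for the pills urn with matrix ((−a,0),(a,−d)) with a ≠ d and a,d > 0, the s-th factorial moment of X̃_{n,m} = X_{n,m} − 1 is E((X̃_{n,m})_s) = s! Σ_{ℓ=0}^{s} [C(n,ℓ) C(m,s−ℓ)/(a/d − 1)^{s−ℓ}] Σ_{i=0}^{s−ℓ} (−1)^{s−ℓ−i} C(s−ℓ,i) / C(m−s+ℓ+i+(a/d)(s−i), m−s+ℓ). -/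
open Finset MeasureTheory

/-- The probability generating function of the generalized pills urn with replacement matrix
`((-α, 0), (αp, -δ))`. -/
noncomputable def pillsH (α δ : ℝ) (p : ℕ) : ℕ → ℕ → ℝ → ℝ
  | n, 0, v => v ^ n
  | 0, m + 1, v => pillsH α δ p p m v
  | n + 1, m + 1, v =>
      α * (n + 1) / (α * (n + 1) + δ * (m + 1)) * pillsH α δ p n (m + 1) v
        + δ * (m + 1) / (α * (n + 1) + δ * (m + 1)) * pillsH α δ p (n + 1 + p) m v
  termination_by n m _ => (m, n)

/-- Generalized binomial coefficient `C(x, k) = x(x-1)⋯(x-k+1)/k!` for real `x`. -/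
noncomputable def genChoose (x : ℝ) (k : ℕ) : ℝ :=
  (∏ i ∈ range k, (x - i)) / (k.factorial : ℝ)

/-!
Substituting `x = e^{-dt}` and writing `r = a/d`, the integral for `h_{n,m}` becomes
`h_{n,m}(v) = v m ∫₀¹ W^n G^{m-1} dx` with `W = 1 + (v-1) x^r` and
`G = 1 - x + (v-1) (x - x^r)/(r-1)`. This identity follows from the urn recursion defining
`pillsH`: the integrals `∫₀¹ W^N G^M` satisfy the same recursion, by integrating
`(x W^N G^M)'` over `[0, 1]`. Expanding `W^n G^{m-1}` binomially in `v - 1` leaves Beta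
integrals `∫₀¹ x^β (1-x)^q = 1/((q+1) C(β+q+1, q+1))`, so `h_{n,m}(v)/v` is an explicit
polynomial in `v - 1`, whose `s`-th derivative at `v = 1` is `s!` times its coefficient of
`(v-1)^s`.
-/

open intervalIntegral

lemma genChoose_succ_mul (x : ℝ) (k : ℕ) :
    genChoose x (k + 1) * (k + 1) = genChoose x k * (x - k) := by
  simp only [genChoose, prod_range_succ, Nat.factorial_succ]
  push_cast
  field_simp

lemma integral_rpow_mul_one_sub_pow_succ {β : ℝ} (hβ : 0 ≤ β) (q : ℕ) :
    (β + 1) * ∫ x in (0:ℝ)..1, x ^ β * (1 - x) ^ (q + 1)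
      = (q + 1) * ∫ x in (0:ℝ)..1, x ^ (β + 1) * (1 - x) ^ q := by
  have hint : ∀ γ : ℝ, 0 ≤ γ → ∀ p : ℕ,
      IntervalIntegrable (fun x : ℝ => x ^ γ * (1 - x) ^ p) volume 0 1 := fun γ hγ p =>
    Continuous.intervalIntegrable (by fun_prop (disch := assumption)) _ _
  have hderiv : ∀ x : ℝ, HasDerivAt (fun x => x ^ (β + 1) * (1 - x) ^ (q + 1))
      ((β + 1) * (x ^ β * (1 - x) ^ (q + 1)) - (q + 1) * (x ^ (β + 1) * (1 - x) ^ q)) x := by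
    intro x
    refine ((Real.hasDerivAt_rpow_const (Or.inr (by linarith))).mul
      (((hasDerivAt_id x).const_sub 1).pow (q + 1))).congr_deriv ?_
    simp only [add_sub_cancel_right, id, Nat.add_sub_cancel, Pi.pow_apply]
    push_cast
    ring
  have hFTC := integral_eq_sub_of_hasDerivAt (fun x _ => hderiv x)
    (((hint β hβ _).const_mul _).sub ((hint (β + 1) (by linarith) _).const_mul _))
  rw [integral_sub ((hint β hβ _).const_mul _) ((hint (β + 1) (by linarith) _).const_mul _),
    intervalIntegral.integral_const_mul, intervalIntegral.integral_const_mul] at hFTC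
  simpa [Real.zero_rpow (by linarith : β + 1 ≠ 0), sub_eq_zero] using hFTC

lemma integral_rpow_mul_one_sub_pow {β : ℝ} (hβ : 0 ≤ β) (q : ℕ) :
    ∫ x in (0:ℝ)..1, x ^ β * (1 - x) ^ q = 1 / ((q + 1) * genChoose (β + q + 1) (q + 1)) := by
  induction q generalizing β with
  | zero =>
    simp [integral_rpow (Or.inl (by linarith : (-1 : ℝ) < β)), genChoose,
      Real.zero_rpow (by positivity : β + 1 ≠ 0)]
  | succ q ih =>
    have hβ1 : β + 1 ≠ 0 := by positivity
    have hstep := genChoose_succ_mul (β + (q + 1 : ℕ) + 1) (q + 1)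
    have hparts := integral_rpow_mul_one_sub_pow_succ hβ q
    rw [ih (by linarith)] at hparts
    push_cast at hstep hparts ⊢
    rw [show β + 1 + q + 1 = β + (q + 1) + 1 by ring, mul_one_div,
      div_mul_cancel_left₀ (by positivity : (q : ℝ) + 1 ≠ 0)] at hparts
    rw [mul_comm, hstep, show β + (q + 1) + 1 - (q + 1) = β + 1 by ring, one_div, mul_inv,
      ← hparts]
    field_simp

lemma integral_pow_mul_rpow_pow_mul_one_sub_pow {r : ℝ} (hr : 0 ≤ r) (i j q : ℕ) :
    ∫ x in (0:ℝ)..1, x ^ i * (x ^ r) ^ j * (1 - x) ^ q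
      = 1 / ((q + 1) * genChoose (i + r * j + q + 1) (q + 1)) := by
  rw [← integral_rpow_mul_one_sub_pow (by positivity : (0 : ℝ) ≤ i + r * j) q]
  refine integral_congr_ae (Filter.Eventually.of_forall fun x hx => ?_)
  have hx : 0 < x := by simpa using hx.1
  rw [Real.rpow_add hx, Real.rpow_natCast, ← Real.rpow_mul_natCast hx.le]

lemma succ_mul_choose_div (M k : ℕ) (hk : k ≤ M) :
    ((M : ℝ) + 1) * M.choose k / ((M - k : ℕ) + 1) = (M + 1).choose k := by
  have h := Nat.choose_mul_succ_eq M k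
  rw [show M + 1 - k = M - k + 1 by omega] at h
  rw [div_eq_iff (by positivity)]
  exact_mod_cast (mul_comm _ _).trans h

lemma iteratedDeriv_sum_mul_sub_pow {𝕜 ι : Type*} [NontriviallyNormedField 𝕜] (I : Finset ι)
    (c : ι → 𝕜) (e : ι → ℕ) (x₀ : 𝕜) (s : ℕ) :
    iteratedDeriv s (fun x => ∑ i ∈ I, c i * (x - x₀) ^ e i) x₀
      = s.factorial * ∑ i ∈ I with e i = s, c i := by
  rw [iteratedDeriv_fun_sum fun i _ => by fun_prop, sum_filter, mul_sum]
  refine sum_congr rfl fun i _ => ?_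
  rw [iteratedDeriv_const_mul_field, iteratedDeriv_comp_sub_const (f := (· ^ e i))]
  dsimp only
  rw [sub_self, iteratedDeriv_fun_pow_zero]
  split_ifs <;> simp_all [mul_comm]

lemma sum_filter_add_eq_sum_range {M : Type*} [AddCommMonoid M] (A B s : ℕ) (g : ℕ → ℕ → M)
    (hg : ∀ ℓ ≤ s, A ≤ ℓ ∨ B ≤ s - ℓ → g ℓ s = 0) :
    ∑ p ∈ range A ×ˢ range B with p.1 + p.2 = s, g p.1 (p.1 + p.2)
      = ∑ ℓ ∈ range (s + 1), g ℓ s := by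
  refine sum_bij_ne_zero (fun p _ _ => p.1) ?_ ?_ ?_ ?_
  · intro p hp _
    simp only [mem_filter, mem_product, mem_range] at hp ⊢
    omega
  · intro p hp _ q hq _ hpq
    simp only [mem_filter] at hp hq
    ext <;> omega
  · intro ℓ hℓ hne
    have hℓs : ℓ ≤ s := Nat.lt_succ_iff.mp (mem_range.mp hℓ)
    refine ⟨(ℓ, s - ℓ), ?_, ?_, rfl⟩
    · simp only [mem_filter, mem_product, mem_range]
      have := mt (hg ℓ hℓs) hne
      omega
    · simpa [Nat.add_sub_cancel' hℓs] using hne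
  · intro p hp _
    simp only [mem_filter] at hp
    rw [hp.2]

noncomputable def pillsW (r v x : ℝ) : ℝ := 1 + (v - 1) * x ^ r

noncomputable def pillsG (r v x : ℝ) : ℝ := 1 - x + (v - 1) * (x - x ^ r) / (r - 1)

noncomputable def pillsIntegral (r v : ℝ) (N M : ℕ) : ℝ :=
  ∫ x in (0:ℝ)..1, pillsW r v x ^ N * pillsG r v x ^ M

section PillsIntegral

variable {r v : ℝ}

lemma continuous_pillsW (hr : 0 ≤ r) : Continuous (pillsW r v) := by
  unfold pillsW; fun_prop (disch := assumption)

lemma continuous_pillsG (hr : 0 ≤ r) : Continuous (pillsG r v) := by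
  unfold pillsG; fun_prop (disch := assumption)

lemma hasDerivAt_pillsW {x : ℝ} (hx : x ≠ 0) :
    HasDerivAt (pillsW r v) (r * (pillsW r v x - 1) / x) x := by
  have h := ((Real.hasDerivAt_rpow_const (p := r) (Or.inl hx)).const_mul (v - 1)).const_add 1
  refine h.congr_deriv ?_
  rw [Real.rpow_sub_one hx]
  unfold pillsW
  field_simp
  ring

lemma hasDerivAt_pillsG (hr1 : r ≠ 1) {x : ℝ} (hx : x ≠ 0) :
    HasDerivAt (pillsG r v) ((pillsG r v x - pillsW r v x) / x) x := by
  have h := ((hasDerivAt_id x).const_sub 1).add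
    ((((hasDerivAt_id x).sub (Real.hasDerivAt_rpow_const (p := r) (Or.inl hx))).const_mul
      (v - 1)).div_const (r - 1))
  refine h.congr_deriv ?_
  have : r - 1 ≠ 0 := sub_ne_zero.mpr hr1
  rw [Real.rpow_sub_one hx]
  unfold pillsG pillsW
  field_simp
  ring

lemma hasDerivAt_mul_pillsW_pow_mul_pillsG_pow (hr1 : r ≠ 1) (N M : ℕ) {x : ℝ} (hx : x ≠ 0) :
    HasDerivAt (fun x => x * (pillsW r v x ^ N * pillsG r v x ^ M))
      ((1 + N * r + M) * (pillsW r v x ^ N * pillsG r v x ^ M)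
        - N * r * (pillsW r v x ^ (N - 1) * pillsG r v x ^ M)
        - M * (pillsW r v x ^ (N + 1) * pillsG r v x ^ (M - 1))) x := by
  have h := (hasDerivAt_id x).mul
    (((hasDerivAt_pillsW (r := r) (v := v) hx).pow N).mul
      ((hasDerivAt_pillsG (v := v) hr1 hx).pow M))
  refine h.congr_deriv ?_
  set W := pillsW r v x
  set G := pillsG r v x
  have hW : (N : ℝ) * W ^ (N - 1) * W = N * W ^ N := by
    cases N <;> simp [pow_succ]; ring
  have hG : (M : ℝ) * G ^ (M - 1) * G = M * G ^ M := by
    cases M <;> simp [pow_succ]; ring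
  simp only [id, Pi.mul_apply, Pi.pow_apply]
  field_simp
  linear_combination (r * G ^ M) * hW + (W ^ N) * hG

lemma continuous_pillsW_pow_mul_pillsG_pow (hr : 0 ≤ r) (N M : ℕ) :
    Continuous fun x => pillsW r v x ^ N * pillsG r v x ^ M :=
  ((continuous_pillsW hr).pow N).mul ((continuous_pillsG hr).pow M)

@[simp] lemma pillsW_one : pillsW r v 1 = v := by simp [pillsW]

@[simp] lemma pillsG_one : pillsG r v 1 = 0 := by simp [pillsG]

/-- Integration by parts, in the form `∫₀¹ (x W^N G^M)' dx = W(1)^N G(1)^M = v^N 0^M`. -/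
lemma pillsIntegral_recurrence (hr : 0 ≤ r) (hr1 : r ≠ 1) (N M : ℕ) :
    (1 + N * r + M) * pillsIntegral r v N M
      = N * r * pillsIntegral r v (N - 1) M + M * pillsIntegral r v (N + 1) (M - 1)
        + v ^ N * 0 ^ M := by
  have hint : ∀ N M : ℕ, IntervalIntegrable (fun x => pillsW r v x ^ N * pillsG r v x ^ M)
      volume 0 1 :=
    fun N M => (continuous_pillsW_pow_mul_pillsG_pow hr N M).intervalIntegrable _ _
  have hFTC := integral_eq_sub_of_hasDerivAt_of_le zero_le_one
    ((continuous_id.mul (continuous_pillsW_pow_mul_pillsG_pow hr N M)).continuousOn)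
    (fun x hx => hasDerivAt_mul_pillsW_pow_mul_pillsG_pow (v := v) hr1 N M hx.1.ne')
    ((((hint N M).const_mul _).sub ((hint _ _).const_mul _)).sub ((hint _ _).const_mul _))
  rw [integral_sub (((hint N M).const_mul _).sub ((hint _ _).const_mul _))
    ((hint _ _).const_mul _), integral_sub ((hint N M).const_mul _) ((hint _ _).const_mul _),
    intervalIntegral.integral_const_mul, intervalIntegral.integral_const_mul,
    intervalIntegral.integral_const_mul] at hFTC
  simp only [Pi.mul_apply, id, zero_mul, one_mul, sub_zero, pillsW_one, pillsG_one] at hFTC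
  simp only [pillsIntegral]
  linear_combination hFTC

lemma pillsH_eq_pillsIntegral (hr : 0 ≤ r) (hr1 : r ≠ 1) {δ : ℝ} (hδ : δ ≠ 0) (m n : ℕ) :
    pillsH (r * δ) δ 1 n m v = v * (m * pillsIntegral r v n (m - 1)) + v ^ n * 0 ^ m := by
  induction m generalizing n with
  | zero => simp [pillsH]
  | succ m ihm =>
    induction n with
    | zero =>
      have hrec := pillsIntegral_recurrence (v := v) hr hr1 0 m
      rw [pillsH, ihm]
      push_cast at hrec ⊢
      linear_combination (-v) * hrec
    | succ n ihn =>
      have hrec := pillsIntegral_recurrence (v := v) hr hr1 (n + 1) m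
      have hden : r * δ * (n + 1) + δ * (m + 1) ≠ 0 := by
        rw [show r * δ * (n + 1) + δ * (m + 1) = δ * (r * (n + 1) + m + 1) by ring]
        exact mul_ne_zero hδ (by positivity)
      rw [pillsH, ihn, ihm]
      field_simp
      push_cast at hrec ⊢
      linear_combination (-(v * (m + 1))) * hrec

end PillsIntegral

lemma pillsW_pow_mul_pillsG_pow_eq_sum (r v x : ℝ) (n M : ℕ) :
    pillsW r v x ^ n * pillsG r v x ^ M
      = ∑ ℓ ∈ range (n + 1), ∑ k ∈ range (M + 1),
          n.choose ℓ * M.choose k * (v - 1) ^ (ℓ + k) / (r - 1) ^ k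
            * ∑ i ∈ range (k + 1), (-1) ^ (k - i) * k.choose i
                * (x ^ i * (x ^ r) ^ (ℓ + (k - i)) * (1 - x) ^ (M - k)) := by
  have hW : pillsW r v x = (v - 1) * x ^ r + 1 := by rw [pillsW]; ring
  have hG : pillsG r v x = (v - 1) / (r - 1) * (x + -x ^ r) + (1 - x) := by rw [pillsG]; ring
  rw [hW, hG, add_pow, add_pow, sum_mul_sum]
  refine sum_congr rfl fun ℓ _ => sum_congr rfl fun k _ => ?_
  rw [mul_pow _ (x + _), add_pow]
  simp only [mul_sum, sum_mul]
  refine sum_congr rfl fun i _ => ?_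
  rw [neg_pow, mul_pow, div_pow]
  ring

/-- The `ℓ`-th summand of the coefficient of `(v - 1) ^ s` in `h_{n,m}(v) / v`. -/
noncomputable def pillsCoeff (r : ℝ) (n m ℓ s : ℕ) : ℝ :=
  ((n.choose ℓ : ℝ) * (m.choose (s - ℓ) : ℝ) / (r - 1) ^ (s - ℓ))
    * ∑ i ∈ range (s - ℓ + 1),
        (-1 : ℝ) ^ (s - ℓ - i) * ((s - ℓ).choose i : ℝ)
          / genChoose ((m : ℝ) - s + ℓ + i + r * ((s : ℝ) - i)) (m + ℓ - s)

lemma succ_mul_pillsIntegral_eq_sum {r : ℝ} (hr : 0 ≤ r) (v : ℝ) (n M : ℕ) :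
    (M + 1) * pillsIntegral r v n M
      = ∑ ℓ ∈ range (n + 1), ∑ k ∈ range (M + 1),
          pillsCoeff r n (M + 1) ℓ (ℓ + k) * (v - 1) ^ (ℓ + k) := by
  rw [pillsIntegral, integral_congr fun x _ => pillsW_pow_mul_pillsG_pow_eq_sum r v x n M,
    intervalIntegral.integral_finsetSum fun ℓ _ => by
      apply Continuous.intervalIntegrable; fun_prop (disch := assumption),
    mul_sum]
  refine sum_congr rfl fun ℓ _ => ?_
  rw [intervalIntegral.integral_finsetSum fun k _ => by
      apply Continuous.intervalIntegrable; fun_prop (disch := assumption),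
    mul_sum]
  refine sum_congr rfl fun k hk => ?_
  have hkM : k ≤ M := Nat.lt_succ_iff.mp (mem_range.mp hk)
  rw [intervalIntegral.integral_const_mul, intervalIntegral.integral_finsetSum fun i _ => by
    apply Continuous.intervalIntegrable; fun_prop (disch := assumption)]
  simp only [intervalIntegral.integral_const_mul, integral_pow_mul_rpow_pow_mul_one_sub_pow hr,
    pillsCoeff, Nat.add_sub_cancel_left, show M + 1 + ℓ - (ℓ + k) = M - k + 1 by omega]
  rw [← succ_mul_choose_div M k hkM]
  simp only [mul_sum, sum_mul]
  refine sum_congr rfl fun i hi => ?_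
  have hik : i ≤ k := Nat.lt_succ_iff.mp (mem_range.mp hi)
  rw [show ((M + 1 : ℕ) : ℝ) - (ℓ + k : ℕ) + ℓ + i + r * ((ℓ + k : ℕ) - i)
      = i + r * (ℓ + (k - i) : ℕ) + (M - k : ℕ) + 1 by
    push_cast [Nat.cast_sub hik, Nat.cast_sub hkM]; ring, one_div, mul_inv]
  ring

lemma pillsCoeff_eq_zero {r : ℝ} {n m ℓ s : ℕ} (hm : 1 ≤ m) (hℓs : ℓ ≤ s)
    (h : n + 1 ≤ ℓ ∨ m ≤ s - ℓ) : pillsCoeff r n m ℓ s = 0 := by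
  unfold pillsCoeff
  obtain hn | hms := h
  · simp [Nat.choose_eq_zero_of_lt (by omega : n < ℓ)]
  obtain hlt | heq := hms.lt_or_eq
  · simp [Nat.choose_eq_zero_of_lt hlt]
  · have halt : ∑ i ∈ range (m + 1), (-1 : ℝ) ^ (m - i) * (m.choose i : ℝ) = 0 := by
      have h := add_pow (1 : ℝ) (-1) m
      rw [add_neg_cancel, zero_pow (by omega)] at h
      simpa [mul_comm] using h.symm
    simp [← heq, show m + ℓ - s = 0 by omega, genChoose, halt]

theorem pills_factorial_moment_p_one_general (a d : ℕ) (hd : 0 < d) (had : a ≠ d)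
    (n m : ℕ) (hm : 1 ≤ m) (s : ℕ) :
    iteratedDeriv s (fun v : ℝ => pillsH (a : ℝ) (d : ℝ) 1 n m v / v) 1
      = (s.factorial : ℝ)
        * ∑ ℓ ∈ range (s + 1),
            ((n.choose ℓ : ℝ) * (m.choose (s - ℓ) : ℝ) / ((a : ℝ) / d - 1) ^ (s - ℓ))
              * ∑ i ∈ range (s - ℓ + 1),
                  (-1 : ℝ) ^ (s - ℓ - i) * ((s - ℓ).choose i : ℝ)
                    / genChoose
                        ((m : ℝ) - s + ℓ + i + ((a : ℝ) / d) * ((s : ℝ) - i))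
                        (m + ℓ - s) := by
  obtain ⟨M, rfl⟩ : ∃ M, m = M + 1 := ⟨m - 1, by omega⟩
  set r := (a : ℝ) / d
  have hd' : (d : ℝ) ≠ 0 := by positivity
  have hr : 0 ≤ r := by positivity
  have hr1 : r ≠ 1 := by
    rw [Ne, div_eq_one_iff_eq hd']
    exact_mod_cast had
  have hpoly : (fun v => pillsH a d 1 n (M + 1) v / v) =ᶠ[nhds 1] fun v =>
      ∑ p ∈ range (n + 1) ×ˢ range (M + 1),
        pillsCoeff r n (M + 1) p.1 (p.1 + p.2) * (v - 1) ^ (p.1 + p.2) := by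
    filter_upwards [eventually_ne_nhds one_ne_zero] with v hv
    rw [sum_product, ← succ_mul_pillsIntegral_eq_sum hr, ← div_mul_cancel₀ (a : ℝ) hd',
      pillsH_eq_pillsIntegral hr hr1 hd']
    field_simp
    simp
  rw [hpoly.iteratedDeriv_eq, iteratedDeriv_sum_mul_sub_pow,
    sum_filter_add_eq_sum_range _ _ _ _ fun ℓ hℓ h => pillsCoeff_eq_zero (by omega) hℓ h]
  rfl

/-- Factorial moments for the pills urn with matrix `((-a, 0), (a, -d))` (`p = 1`), `a ≠ d`:
the `s`-th factorial moment of `X̃ = X_{n,m} - 1`, given as the `s`-th derivative of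
`h_{n,m}(v)/v` at `v = 1`, equals
`s! ∑_{ℓ=0}^s [C(n,ℓ)C(m,s-ℓ)/(a/d-1)^{s-ℓ}]
  ∑_{i=0}^{s-ℓ} (-1)^{s-ℓ-i} C(s-ℓ,i) / C(m-s+ℓ+i+(a/d)(s-i), m-s+ℓ)`. -/
theorem pills_factorial_moment_p_one (a d : ℕ) (ha : 0 < a) (hd : 0 < d) (had : a ≠ d)
    (n m : ℕ) (hm : 1 ≤ m) (s : ℕ) :
    iteratedDeriv s (fun v : ℝ => pillsH (a : ℝ) (d : ℝ) 1 n m v / v) 1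
      = (s.factorial : ℝ)
        * ∑ ℓ ∈ range (s + 1),
            ((n.choose ℓ : ℝ) * (m.choose (s - ℓ) : ℝ) / ((a : ℝ) / d - 1) ^ (s - ℓ))
              * ∑ i ∈ range (s - ℓ + 1),
                  (-1 : ℝ) ^ (s - ℓ - i) * ((s - ℓ).choose i : ℝ)
                    / genChoose
                        ((m : ℝ) - s + ℓ + i + ((a : ℝ) / d) * ((s : ℝ) - i))
                        (m + ℓ - s) :=
  pills_factorial_moment_p_one_general a d hd had n m hm s
end

section
/- The classical sampling without replacement distribution: for α_n = n and β_m = m (unit weights), the explicit formula of the theorem with α_j = j, β_i = i gives P(X_{n,m}=k) = m! (n!/k!) Σ_{ℓ=1}^{m} (−1)^{ℓ−1} / [(∏_{j=k}^{n}(j+ℓ)) (ℓ−1)! (m−ℓ)!] for 1 ≤ k ≤ n. -/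
open Finset

lemma urnP_rec (α β : ℕ → ℝ) (n m k : ℕ) : urnP α β (n+1) (m+1) k =
      α (n + 1) / (α (n + 1) + β (m + 1)) * urnP α β n (m + 1) k
        + β (m + 1) / (α (n + 1) + β (m + 1)) * urnP α β (n + 1) m k := by
  rw [urnP]

lemma urnP_base (α β : ℕ → ℝ) (n k : ℕ) : urnP α β n 0 k = if k = n then 1 else 0 := by
  cases n <;> rw [urnP]

lemma urnP_base0 (α β : ℕ → ℝ) (m k : ℕ) : urnP α β 0 (m+1) k = if k = 0 then 1 else 0 := by
  rw [urnP]

lemma urnP_eq_zero : ∀ n m k : ℕ, n < k →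
    urnP (fun n => (n : ℝ)) (fun m => (m : ℝ)) n m k = 0 := by
  intro n
  induction n with
  | zero =>
    intro m k hk
    cases m with
    | zero => rw [urnP_base, if_neg (by omega)]
    | succ m => rw [urnP_base0, if_neg (by omega)]
  | succ n ihn =>
    intro m
    induction m with
    | zero => intro k hk; rw [urnP_base, if_neg (by omega)]
    | succ m ihm =>
      intro k hk
      rw [urnP_rec, ihn (m+1) k (by omega), ihm k hk]
      ring

lemma prod_Icc_add_one (k : ℕ) : ∀ n : ℕ, k ≤ n + 1 →
    ∏ j ∈ Icc k n, ((j : ℝ) + 1) = (n + 1).factorial / k.factorial := by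
  intro n
  induction n with
  | zero =>
    intro h
    interval_cases k
    · rw [Finset.Icc_self, Finset.prod_singleton]
      norm_num [Nat.factorial]
    · rw [Finset.Icc_eq_empty (by omega), Finset.prod_empty]
      norm_num [Nat.factorial]
  | succ n ihn =>
    intro h
    rcases Nat.lt_or_ge n k with h' | h'
    · have hk : k = n + 2 ∨ k = n + 1 := by omega
      rcases hk with rfl | rfl
      · rw [Finset.Icc_eq_empty (by omega), Finset.prod_empty, div_self (by positivity)]
      · rw [Finset.Icc_self, Finset.prod_singleton]
        rw [Nat.factorial_succ (n+1)]
        have : ((n+1).factorial : ℝ) ≠ 0 := by positivity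
        push_cast
        field_simp
    · rw [Finset.prod_Icc_succ_top (by omega), ihn (by omega)]
      have h1 : ((n+1).factorial : ℝ) ≠ 0 := by positivity
      have h2 : (k.factorial : ℝ) ≠ 0 := by positivity
      rw [Nat.factorial_succ (n+1)]
      push_cast
      field_simp

lemma prod_Icc_pos (k n ℓ : ℕ) (hℓ : 1 ≤ ℓ) : 0 < ∏ j ∈ Icc k n, ((j : ℝ) + (ℓ : ℝ)) := by
  apply Finset.prod_pos
  intro j _
  have : (1:ℝ) ≤ (ℓ:ℝ) := by exact_mod_cast hℓ
  positivity

/-- The explicit formula. -/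
noncomputable def urnF (n m k : ℕ) : ℝ :=
  (m.factorial : ℝ) * ((n.factorial : ℝ) / (k.factorial : ℝ))
    * ∑ ℓ ∈ Icc 1 m,
        (-1 : ℝ) ^ (ℓ - 1)
          / ((∏ j ∈ Icc k n, ((j : ℝ) + (ℓ : ℝ))) * ((ℓ - 1).factorial : ℝ)
              * ((m - ℓ).factorial : ℝ))

lemma urnF_row1 (n k : ℕ) (hk : 1 ≤ k) (hkn : k ≤ n) : urnF n 1 k = 1 / ((n : ℝ) + 1) := by
  unfold urnF
  rw [Finset.Icc_self, Finset.sum_singleton]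
  norm_num [Nat.factorial]
  have hp : ∏ j ∈ Icc k n, ((j : ℝ) + (1:ℕ)) = (n + 1).factorial / k.factorial := by
    rw [show (((1:ℕ)):ℝ) = (1:ℝ) by norm_num]
    exact prod_Icc_add_one k n (by omega)
  push_cast at hp
  rw [hp]
  have h1 : ((n+1).factorial : ℝ) = ((n:ℝ)+1) * n.factorial := by
    rw [Nat.factorial_succ]; push_cast; ring
  have h2 : (k.factorial : ℝ) ≠ 0 := by positivity
  have h4 : (n.factorial : ℝ) ≠ 0 := by positivity
  have h5 : ((n:ℝ)+1) ≠ 0 := by positivity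
  rw [h1]
  field_simp

lemma urnP_row1 : ∀ n k : ℕ, 1 ≤ k → k ≤ n →
    urnP (fun n => (n : ℝ)) (fun m => (m : ℝ)) n 1 k = 1 / ((n : ℝ) + 1) := by
  intro n
  induction n with
  | zero => intro k h1 h2; omega
  | succ n ihn =>
    intro k h1 h2
    simp only [urnP_rec]
    have hne : ((n:ℝ) + 1 + 1) ≠ 0 := by positivity
    rcases Nat.lt_or_ge n k with h | h
    · have hk : k = n + 1 := by omega
      subst hk
      rw [urnP_eq_zero n 1 (n+1) (by omega), urnP_base, if_pos rfl]
      push_cast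
      field_simp
      ring
    · rw [ihn k h1 h, urnP_base, if_neg (by omega)]
      push_cast
      field_simp
      ring
lemma urnF_boundary (n M : ℕ) (hM : 2 ≤ M) : urnF n M (n + 1) = 0 := by
  unfold urnF
  have hempty : Icc (n+1) n = (∅ : Finset ℕ) := Finset.Icc_eq_empty (by omega)
  have hsum : (∑ ℓ ∈ Icc 1 M,
      (-1 : ℝ) ^ (ℓ - 1)
        / ((∏ j ∈ Icc (n+1) n, ((j : ℝ) + (ℓ : ℝ))) * ((ℓ - 1).factorial : ℝ)
            * ((M - ℓ).factorial : ℝ))) = 0 := by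
    rw [← Finset.Ico_add_one_right_eq_Icc, Finset.sum_Ico_eq_sum_range]
    simp only [hempty, Finset.prod_empty, one_mul]
    have hr : M + 1 - 1 = M := by omega
    rw [hr]
    have key : ∀ i ∈ range M, (-1 : ℝ) ^ (1 + i - 1)
        / (((1 + i - 1).factorial : ℝ) * ((M - (1 + i)).factorial : ℝ))
        = ((-1 : ℝ) ^ i * ((M-1).choose i : ℝ)) / ((M-1).factorial : ℝ) := by
      intro i hi
      simp only [Finset.mem_range] at hi
      have h1 : 1 + i - 1 = i := by omega
      have h2 : M - (1 + i) = (M - 1) - i := by omega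
      rw [h1, h2]
      have hle : i ≤ M - 1 := by omega
      have hfact := Nat.choose_mul_factorial_mul_factorial hle
      have hfactR : (((M-1).choose i : ℝ)) * (i.factorial : ℝ) * (((M-1) - i).factorial : ℝ)
          = ((M-1).factorial : ℝ) := by exact_mod_cast congrArg Nat.cast hfact
      rw [div_eq_div_iff (by positivity) (by positivity)]
      linear_combination ((-1:ℝ)^i) * hfactR.symm
    rw [Finset.sum_congr rfl key, ← Finset.sum_div]
    have h0 : (∑ i ∈ range M, (-1 : ℝ) ^ i * ((M-1).choose i : ℝ)) = 0 := by
      have hM1 : M - 1 + 1 = M := by omega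
      have h := @Int.alternating_sum_range_choose (M-1)
      rw [if_neg (by omega), hM1] at h
      exact_mod_cast congrArg (Int.cast : ℤ → ℝ) h
    rw [h0, zero_div]
  rw [hsum, mul_zero]

lemma urnF_key (n m k : ℕ) (hk1 : 1 ≤ k) (hk : k ≤ n + 1) (hm : 1 ≤ m) :
    urnF (n+1) (m+1) k
      = ((n:ℝ)+1) / ((n:ℝ)+(m:ℝ)+2) * urnF n (m+1) k
        + ((m:ℝ)+1) / ((n:ℝ)+(m:ℝ)+2) * urnF (n+1) m k := by
  have hN : ((n:ℝ)+(m:ℝ)+2) ≠ 0 := by positivity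
  have hkf : (k.factorial : ℝ) ≠ 0 := by positivity
  have hnf : (n.factorial : ℝ) ≠ 0 := by positivity
  have hmf : (m.factorial : ℝ) ≠ 0 := by positivity
  have hn1 : ((n+1).factorial : ℝ) = ((n:ℝ)+1) * (n.factorial : ℝ) := by
    rw [Nat.factorial_succ]; push_cast; ring
  have hm1 : ((m+1).factorial : ℝ) = ((m:ℝ)+1) * (m.factorial : ℝ) := by
    rw [Nat.factorial_succ]; push_cast; ring
  have hprod : ∀ ℓ : ℕ, ∏ j ∈ Icc k (n+1), ((j : ℝ) + (ℓ : ℝ))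
      = (∏ j ∈ Icc k n, ((j : ℝ) + (ℓ : ℝ))) * (((n:ℝ)+1) + (ℓ:ℝ)) := by
    intro ℓ
    rw [Finset.prod_Icc_succ_top hk]
    push_cast; ring
  unfold urnF
  rw [Finset.sum_Icc_succ_top (show 1 ≤ m + 1 by omega),
      Finset.sum_Icc_succ_top (show 1 ≤ m + 1 by omega)]
  -- notation abbreviations via local lets would complicate; work with explicit terms
  have hterm : ∀ ℓ ∈ Icc 1 m,
      ((m+1).factorial : ℝ) * (((n+1).factorial : ℝ) / (k.factorial : ℝ)) *
        ((-1:ℝ) ^ (ℓ-1) / ((∏ j ∈ Icc k (n+1), ((j:ℝ)+(ℓ:ℝ)))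
          * (((ℓ-1).factorial:ℝ)) * (((m+1-ℓ).factorial:ℝ))))
      = ((n:ℝ)+1) / ((n:ℝ)+(m:ℝ)+2) *
          (((m+1).factorial : ℝ) * ((n.factorial:ℝ) / (k.factorial:ℝ)) *
            ((-1:ℝ) ^ (ℓ-1) / ((∏ j ∈ Icc k n, ((j:ℝ)+(ℓ:ℝ)))
              * (((ℓ-1).factorial:ℝ)) * (((m+1-ℓ).factorial:ℝ)))))
        + ((m:ℝ)+1) / ((n:ℝ)+(m:ℝ)+2) *
          ((m.factorial : ℝ) * (((n+1).factorial:ℝ) / (k.factorial:ℝ)) *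
            ((-1:ℝ) ^ (ℓ-1) / ((∏ j ∈ Icc k (n+1), ((j:ℝ)+(ℓ:ℝ)))
              * (((ℓ-1).factorial:ℝ)) * (((m-ℓ).factorial:ℝ))))) := by
    intro ℓ hℓ
    simp only [Finset.mem_Icc] at hℓ
    obtain ⟨hℓ1, hℓm⟩ := hℓ
    have hP := prod_Icc_pos k n ℓ hℓ1
    have hPne : (∏ j ∈ Icc k n, ((j:ℝ)+(ℓ:ℝ))) ≠ 0 := ne_of_gt hP
    have hℓf : (((ℓ-1).factorial:ℝ)) ≠ 0 := by positivity
    have hmℓf : (((m-ℓ).factorial:ℝ)) ≠ 0 := by positivity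
    have hmℓ : (((m-ℓ):ℕ):ℝ) = (m:ℝ) - (ℓ:ℝ) := by
      have : ((ℓ:ℕ):ℝ) ≤ ((m:ℕ):ℝ) := by exact_mod_cast hℓm
      push_cast [hℓm]; ring
    have hfs : (((m+1-ℓ).factorial:ℝ)) = ((m:ℝ) - (ℓ:ℝ) + 1) * ((m-ℓ).factorial:ℝ) := by
      rw [show m + 1 - ℓ = (m - ℓ) + 1 by omega, Nat.factorial_succ]
      push_cast [hℓm]; ring
    have hℓR : (1:ℝ) ≤ (ℓ:ℝ) := by exact_mod_cast hℓ1
    have hmR : (ℓ:ℝ) ≤ (m:ℝ) := by exact_mod_cast hℓm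
    have hmsub : (m:ℝ) - (ℓ:ℝ) + 1 ≠ 0 := by nlinarith
    have hnℓ : ((n:ℝ)+1) + (ℓ:ℝ) ≠ 0 := by positivity
    rw [hprod ℓ, hfs, hn1, hm1]
    field_simp
    ring
  have hlast :
      ((m+1).factorial : ℝ) * (((n+1).factorial : ℝ) / (k.factorial : ℝ)) *
        ((-1:ℝ) ^ (m+1-1) / ((∏ j ∈ Icc k (n+1), ((j:ℝ)+((m+1:ℕ):ℝ)))
          * (((m+1-1).factorial:ℝ)) * (((m+1-(m+1)).factorial:ℝ))))
      = ((n:ℝ)+1) / ((n:ℝ)+(m:ℝ)+2) *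
          (((m+1).factorial : ℝ) * ((n.factorial:ℝ) / (k.factorial:ℝ)) *
            ((-1:ℝ) ^ (m+1-1) / ((∏ j ∈ Icc k n, ((j:ℝ)+((m+1:ℕ):ℝ)))
              * (((m+1-1).factorial:ℝ)) * (((m+1-(m+1)).factorial:ℝ))))) := by
    have hP := prod_Icc_pos k n (m+1) (by omega)
    have hPne : (∏ j ∈ Icc k n, ((j:ℝ)+((m+1:ℕ):ℝ))) ≠ 0 := ne_of_gt hP
    rw [hprod (m+1), show m + 1 - (m+1) = 0 by omega, show m + 1 - 1 = m by omega]
    simp only [Nat.factorial_zero, Nat.cast_one, mul_one]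
    rw [hn1]
    have hcast : (((m+1:ℕ)):ℝ) = (m:ℝ) + 1 := by push_cast; ring
    rw [hcast]
    field_simp
    ring
  have hsum1 :
      ((m+1).factorial : ℝ) * (((n+1).factorial : ℝ) / (k.factorial : ℝ)) *
        (∑ ℓ ∈ Icc 1 m, (-1:ℝ) ^ (ℓ-1) / ((∏ j ∈ Icc k (n+1), ((j:ℝ)+(ℓ:ℝ)))
          * (((ℓ-1).factorial:ℝ)) * (((m+1-ℓ).factorial:ℝ))))
      = ∑ ℓ ∈ Icc 1 m,
          (((n:ℝ)+1) / ((n:ℝ)+(m:ℝ)+2) *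
            (((m+1).factorial : ℝ) * ((n.factorial:ℝ) / (k.factorial:ℝ)) *
              ((-1:ℝ) ^ (ℓ-1) / ((∏ j ∈ Icc k n, ((j:ℝ)+(ℓ:ℝ)))
                * (((ℓ-1).factorial:ℝ)) * (((m+1-ℓ).factorial:ℝ)))))
          + ((m:ℝ)+1) / ((n:ℝ)+(m:ℝ)+2) *
            ((m.factorial : ℝ) * (((n+1).factorial:ℝ) / (k.factorial:ℝ)) *
              ((-1:ℝ) ^ (ℓ-1) / ((∏ j ∈ Icc k (n+1), ((j:ℝ)+(ℓ:ℝ)))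
                * (((ℓ-1).factorial:ℝ)) * (((m-ℓ).factorial:ℝ)))))) := by
    rw [Finset.mul_sum]
    exact Finset.sum_congr rfl hterm
  have hsum2 :
      (∑ ℓ ∈ Icc 1 m,
          (((n:ℝ)+1) / ((n:ℝ)+(m:ℝ)+2) *
            (((m+1).factorial : ℝ) * ((n.factorial:ℝ) / (k.factorial:ℝ)) *
              ((-1:ℝ) ^ (ℓ-1) / ((∏ j ∈ Icc k n, ((j:ℝ)+(ℓ:ℝ)))
                * (((ℓ-1).factorial:ℝ)) * (((m+1-ℓ).factorial:ℝ)))))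
          + ((m:ℝ)+1) / ((n:ℝ)+(m:ℝ)+2) *
            ((m.factorial : ℝ) * (((n+1).factorial:ℝ) / (k.factorial:ℝ)) *
              ((-1:ℝ) ^ (ℓ-1) / ((∏ j ∈ Icc k (n+1), ((j:ℝ)+(ℓ:ℝ)))
                * (((ℓ-1).factorial:ℝ)) * (((m-ℓ).factorial:ℝ)))))))
      = ((n:ℝ)+1) / ((n:ℝ)+(m:ℝ)+2) * (((m+1).factorial : ℝ) * ((n.factorial:ℝ) / (k.factorial:ℝ)))
          * (∑ ℓ ∈ Icc 1 m, (-1:ℝ) ^ (ℓ-1) / ((∏ j ∈ Icc k n, ((j:ℝ)+(ℓ:ℝ)))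
                * (((ℓ-1).factorial:ℝ)) * (((m+1-ℓ).factorial:ℝ))))
        + ((m:ℝ)+1) / ((n:ℝ)+(m:ℝ)+2) * ((m.factorial : ℝ) * (((n+1).factorial:ℝ) / (k.factorial:ℝ)))
          * (∑ ℓ ∈ Icc 1 m, (-1:ℝ) ^ (ℓ-1) / ((∏ j ∈ Icc k (n+1), ((j:ℝ)+(ℓ:ℝ)))
                * (((ℓ-1).factorial:ℝ)) * (((m-ℓ).factorial:ℝ)))) := by
    rw [Finset.sum_add_distrib, Finset.mul_sum, Finset.mul_sum]
    congr 1 <;> exact Finset.sum_congr rfl (fun ℓ _ => by ring)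
  linear_combination hsum1 + hsum2 + hlast

lemma urn_main : ∀ n m k : ℕ, 1 ≤ m → 1 ≤ k → k ≤ n →
    urnP (fun n => (n : ℝ)) (fun m => (m : ℝ)) n m k = urnF n m k := by
  intro n
  induction n with
  | zero => intro m k _ h1 h2; omega
  | succ n ihn =>
    intro m
    induction m with
    | zero => intro k h; omega
    | succ m ihm =>
      intro k _ hk1 hkn
      cases Nat.eq_zero_or_pos m with
      | inl h0 =>
        subst h0
        rw [urnP_row1 (n+1) k hk1 hkn, urnF_row1 (n+1) k hk1 hkn]
      | inr hm =>
        have h1 : urnP (fun n => (n : ℝ)) (fun m => (m : ℝ)) n (m+1) k = urnF n (m+1) k := by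
          rcases Nat.lt_or_ge n k with h | h
          · have hk : k = n + 1 := by omega
            subst hk
            rw [urnP_eq_zero n (m+1) (n+1) (by omega), urnF_boundary n (m+1) (by omega)]
          · exact ihn (m+1) k (by omega) hk1 h
        have h2 : urnP (fun n => (n : ℝ)) (fun m => (m : ℝ)) (n+1) m k = urnF (n+1) m k :=
          ihm k hm hk1 hkn
        simp only [urnP_rec]
        rw [h1, h2, urnF_key n m k hk1 hkn hm]
        push_cast
        ring


/-- Classical sampling without replacement (`α n = n`, `β m = m`): for `1 ≤ k ≤ n`, `m ≥ 1`,
`P(X_{n,m} = k) = m! (n!/k!) ∑_{ℓ=1}^m (-1)^{ℓ-1} / [(∏_{j=k}^n (j+ℓ)) (ℓ-1)! (m-ℓ)!]`. -/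
theorem sampling_without_replacement (n m k : ℕ) (hn : 1 ≤ n) (hm : 1 ≤ m) (hk : 1 ≤ k)
    (hkn : k ≤ n) :
    urnP (fun n => (n : ℝ)) (fun m => (m : ℝ)) n m k
      = (m.factorial : ℝ) * ((n.factorial : ℝ) / (k.factorial : ℝ))
        * ∑ ℓ ∈ Icc 1 m,
            (-1 : ℝ) ^ (ℓ - 1)
              / ((∏ j ∈ Icc k n, ((j : ℝ) + (ℓ : ℝ))) * ((ℓ - 1).factorial : ℝ)
                  * ((m - ℓ).factorial : ℝ)) := by
  rw [urn_main n m k hm hk hkn]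
  rfl
end
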